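/- arXiv:2011.13670 — 5 statements merged into one kernel-verified Lean document; each statement's English description precedes it below -/
import Mathlib

section
/- If a sequence ξ : ℕ → ℝⁿ satisfies the exponential turnpike bound ‖ξ(t) − ξ̄‖ ≤ C(ρ^t + ρ^{T−t}) for all t ∈ {0,…,T−1}, with C > 0 and ρ ∈ [0,1), then for every ε > 0 the number of times t ∈ {0,…,T−1} with ‖ξ(t) − ξ̄‖ > ε is bounded by a quantity depending only on ε, C, ρ (independent of T). -/
/-!
Away from the two ends the bound `C (ρ^t + ρ^(T-t))` is at most `2 C ρ^N`, which is `< ε` once `N`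
is large enough in terms of `ε`, `C`, `ρ` alone; so every bad time lies within distance `N` of `0`
or of `T`, and there are at most `2 N` of them whatever `T` is.
-/

theorem ncard_setOf_lt_and_le_two_mul_of_near_ends {T N : ℕ} {p : ℕ → Prop}
    (hp : ∀ t < T, N ≤ t → N ≤ T - t → ¬ p t) :
    {t : ℕ | t < T ∧ p t}.ncard ≤ 2 * N := by
  have hsub : {t : ℕ | t < T ∧ p t} ⊆ ↑(Finset.range N ∪ Finset.Ico (T - N) T) := by
    rintro t ⟨htT, hpt⟩
    simp only [Finset.coe_union, Finset.coe_range, Finset.coe_Ico, Set.mem_union,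
      Set.mem_Iio, Set.mem_Ico]
    by_contra! hfar
    exact hp t htT hfar.1 (by omega) hpt
  calc {t : ℕ | t < T ∧ p t}.ncard
      ≤ (Finset.range N ∪ Finset.Ico (T - N) T).card := by
        simpa only [Set.ncard_coe_finset] using Set.ncard_le_ncard hsub (Finset.finite_toSet _)
    _ ≤ (Finset.range N).card + (Finset.Ico (T - N) T).card := Finset.card_union_le _ _
    _ ≤ 2 * N := by rw [Finset.card_range, Nat.card_Ico]; omega

theorem pow_add_pow_le_two_mul_pow {ρ : ℝ} (hρ0 : 0 ≤ ρ) (hρ1 : ρ ≤ 1) {N a b : ℕ}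
    (ha : N ≤ a) (hb : N ≤ b) : ρ ^ a + ρ ^ b ≤ 2 * ρ ^ N := by
  linarith [pow_le_pow_of_le_one hρ0 hρ1 ha, pow_le_pow_of_le_one hρ0 hρ1 hb]

theorem ncard_exceeds_le_of_exp_bound {C ρ ε : ℝ} (hC : 0 ≤ C) (hρ0 : 0 ≤ ρ) (hρ1 : ρ ≤ 1)
    {N : ℕ} (hN : 2 * C * ρ ^ N < ε) {T : ℕ} {e : ℕ → ℝ}
    (he : ∀ t < T, e t ≤ C * (ρ ^ t + ρ ^ (T - t))) :
    {t : ℕ | t < T ∧ ε < e t}.ncard ≤ 2 * N := by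
  refine ncard_setOf_lt_and_le_two_mul_of_near_ends fun t htT hNt hNTt => not_lt.2 ?_
  calc e t ≤ C * (ρ ^ t + ρ ^ (T - t)) := he t htT
    _ ≤ C * (2 * ρ ^ N) := by gcongr; exact pow_add_pow_le_two_mul_pow hρ0 hρ1 hNt hNTt
    _ ≤ ε := by linarith

noncomputable def turnpikeTime (C ρ ε : ℝ) : ℕ :=
  sInf {N : ℕ | 2 * C * ρ ^ N < ε}

theorem two_mul_mul_pow_turnpikeTime_lt {C ρ ε : ℝ} (hC : 0 < C) (hρ1 : ρ < 1) (hε : 0 < ε) :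
    2 * C * ρ ^ turnpikeTime C ρ ε < ε := by
  obtain ⟨N, hN⟩ := exists_pow_lt_of_lt_one (div_pos hε (mul_pos two_pos hC)) hρ1
  exact Nat.sInf_mem (s := {N : ℕ | 2 * C * ρ ^ N < ε})
    ⟨N, by rwa [lt_div_iff₀' (by positivity)] at hN⟩

/-- exponential turnpike bound implies a cardinality bound on the bad set,
with the bounding function `ν` independent of the horizon `T`. -/
theorem exp_turnpike_implies_cardinality_turnpike
    (n : ℕ) (C ρ : ℝ) (hC : 0 < C) (hρ0 : 0 ≤ ρ) (hρ1 : ρ < 1)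
    (ξbar : EuclideanSpace ℝ (Fin n)) :
    ∃ ν : ℝ → ℕ, ∀ (T : ℕ) (ξ : ℕ → EuclideanSpace ℝ (Fin n)),
      (∀ t < T, ‖ξ t - ξbar‖ ≤ C * (ρ ^ t + ρ ^ (T - t))) →
      ∀ ε > 0, ({t : ℕ | t < T ∧ ε < ‖ξ t - ξbar‖}).ncard ≤ ν ε :=
  ⟨fun ε => 2 * turnpikeTime C ρ ε, fun _ _ hξ _ hε =>
    ncard_exceeds_le_of_exp_bound hC.le hρ0 hρ1.le
      (two_mul_mul_pow_turnpikeTime_lt hC hρ1 hε) hξ⟩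
end

section
/- If a measurable function ξ : [0,T] → ℝⁿ satisfies ‖ξ(t) − ξ̄‖ ≤ C(e^{−γt} + e^{−γ(T−t)}) for all t ∈ [0,T] with C > 0 and γ > 0, then for every ε > 0 the Lebesgue measure of the set Θ_T(ε) = {t ∈ [0,T] : ‖ξ(t) − ξ̄‖ > ε} is at most max{0, −(2/γ) ln(ε/(2C))}, a bound independent of T. -/
/-!
Put `τ = max 0 (-ln(ε/(2C))/γ)`. For `t > τ` we have `C e^{-γt} < ε/2`, so at a time `t`
more than `τ` away from both ends of `[0,T]` the bound gives `‖ξ(t) - ξ̄‖ < ε`.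
Hence `Θ_T(ε)` lies in `[0,τ] ∪ [T-τ,T]`, whose measure is at most `2τ`.
-/

open MeasureTheory Set

/-- The time `τ` after which `C e^{-γt}` stays below `ε/2`. -/
noncomputable def turnpikeExitTime (C γ ε : ℝ) : ℝ :=
  max 0 (-Real.log (ε / (2 * C)) / γ)

lemma turnpikeExitTime_nonneg (C γ ε : ℝ) : 0 ≤ turnpikeExitTime C γ ε :=
  le_max_left _ _

lemma exp_neg_mul_lt_of_neg_log_div_lt {γ a t : ℝ} (hγ : 0 < γ) (ha : 0 < a)
    (ht : -Real.log a / γ < t) : Real.exp (-γ * t) < a := by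
  rw [← Real.lt_log_iff_exp_lt ha]
  rw [div_lt_iff₀ hγ] at ht
  linarith

lemma mul_exp_neg_mul_lt_half_of_turnpikeExitTime_lt {C γ ε t : ℝ}
    (hC : 0 < C) (hγ : 0 < γ) (hε : 0 < ε) (ht : turnpikeExitTime C γ ε < t) :
    C * Real.exp (-γ * t) < ε / 2 := by
  have hexp : Real.exp (-γ * t) < ε / (2 * C) :=
    exp_neg_mul_lt_of_neg_log_div_lt hγ (by positivity) ((le_max_right _ _).trans_lt ht)
  calc C * Real.exp (-γ * t) < C * (ε / (2 * C)) := mul_lt_mul_of_pos_left hexp hC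
    _ = ε / 2 := by field_simp

lemma setOf_lt_subset_Icc_union_Icc {C γ T ε : ℝ}
    (hC : 0 < C) (hγ : 0 < γ) (hε : 0 < ε) {f : ℝ → ℝ}
    (hf : ∀ t ∈ Icc 0 T, f t ≤ C * (Real.exp (-γ * t) + Real.exp (-γ * (T - t)))) :
    {t | t ∈ Icc 0 T ∧ ε < f t} ⊆
      Icc 0 (turnpikeExitTime C γ ε) ∪ Icc (T - turnpikeExitTime C γ ε) T := by
  rintro t ⟨ht, hεt⟩
  by_contra hout
  simp only [mem_union, mem_Icc, not_or, not_and, not_le] at hout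
  have hleft := mul_exp_neg_mul_lt_half_of_turnpikeExitTime_lt hC hγ hε (hout.1 ht.1)
  have hright := mul_exp_neg_mul_lt_half_of_turnpikeExitTime_lt (t := T - t) hC hγ hε
    (by linarith [lt_of_not_ge fun h => (hout.2 h).not_ge ht.2])
  linarith [hf t ht]

lemma volume_setOf_lt_le_turnpikeExitTime {C γ T ε : ℝ}
    (hC : 0 < C) (hγ : 0 < γ) (hε : 0 < ε) {f : ℝ → ℝ}
    (hf : ∀ t ∈ Icc 0 T, f t ≤ C * (Real.exp (-γ * t) + Real.exp (-γ * (T - t)))) :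
    volume {t | t ∈ Icc 0 T ∧ ε < f t} ≤ ENNReal.ofReal (2 * turnpikeExitTime C γ ε) := by
  set τ := turnpikeExitTime C γ ε
  calc volume {t | t ∈ Icc 0 T ∧ ε < f t}
      ≤ volume (Icc 0 τ ∪ Icc (T - τ) T) :=
        measure_mono (setOf_lt_subset_Icc_union_Icc hC hγ hε hf)
    _ ≤ volume (Icc 0 τ) + volume (Icc (T - τ) T) := measure_union_le _ _
    _ = ENNReal.ofReal (2 * τ) := by
      rw [Real.volume_Icc, Real.volume_Icc, sub_zero, sub_sub_cancel, two_mul,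
        ENNReal.ofReal_add (turnpikeExitTime_nonneg C γ ε) (turnpikeExitTime_nonneg C γ ε)]

lemma two_mul_turnpikeExitTime (C γ ε : ℝ) :
    2 * turnpikeExitTime C γ ε = max 0 (-(2 / γ) * Real.log (ε / (2 * C))) := by
  rw [turnpikeExitTime, mul_max_of_nonneg _ _ zero_le_two]
  ring_nf

theorem exp_turnpike_implies_measure_turnpike_general
    (n : ℕ) (C γ T : ℝ) (hC : 0 < C) (hγ : 0 < γ)
    (ξ : ℝ → EuclideanSpace ℝ (Fin n)) (ξbar : EuclideanSpace ℝ (Fin n))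
    (hξ : ∀ t ∈ Set.Icc (0:ℝ) T,
      ‖ξ t - ξbar‖ ≤ C * (Real.exp (-γ * t) + Real.exp (-γ * (T - t)))) :
    ∀ ε > 0,
      volume {t : ℝ | t ∈ Set.Icc (0:ℝ) T ∧ ε < ‖ξ t - ξbar‖}
        ≤ ENNReal.ofReal (max 0 (-(2/γ) * Real.log (ε / (2*C)))) := by
  intro ε hε
  rw [← two_mul_turnpikeExitTime]
  exact volume_setOf_lt_le_turnpikeExitTime hC hγ hε hξ

/-- continuous-time exponential turnpike implies the measure turnpike
property with the explicit bound `max 0 (-(2/γ) ln(ε/(2C)))`, independent of `T`. -/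
theorem exp_turnpike_implies_measure_turnpike
    (n : ℕ) (C γ T : ℝ) (hC : 0 < C) (hγ : 0 < γ) (hT : 0 < T)
    (ξ : ℝ → EuclideanSpace ℝ (Fin n)) (ξbar : EuclideanSpace ℝ (Fin n))
    (hξ : ∀ t ∈ Set.Icc (0:ℝ) T,
      ‖ξ t - ξbar‖ ≤ C * (Real.exp (-γ * t) + Real.exp (-γ * (T - t)))) :
    ∀ ε > 0,
      volume {t : ℝ | t ∈ Set.Icc (0:ℝ) T ∧ ε < ‖ξ t - ξbar‖}
        ≤ ENNReal.ofReal (max 0 (-(2/γ) * Real.log (ε / (2*C)))) :=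
  exp_turnpike_implies_measure_turnpike_general n C γ T hC hγ ξ ξbar hξ
end

section
/- Consider a discrete-time system x(t+1) = f(x(t),u(t)) with running cost ℓ that is strictly dissipative: there exist a storage function S : X → ℝ bounded below and α ∈ 𝒦∞ with S(f(x,u)) − S(x) ≤ ℓ(x,u) − ℓ(x̄,ū) − α(‖x − x̄‖) for all admissible (x,u). Suppose furthermore that there exists C̃ independent of T such that the optimal value satisfies V_T(x₀) ≤ C̃ + T·ℓ(x̄,ū). Then the optimal trajectories have the cardinality state turnpike property at x̄: for each ε > 0 there is ν(ε) < ∞, independent of T, bounding the number of time instants t ∈ {0,…,T−1} with ‖x*(t) − x̄‖ > ε. -/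
/-!
Summing the dissipation inequality along a trajectory telescopes the storage. Since `S ≥ m` and
the accumulated cost exceeds `T · ℓ(x̄, ū)` by at most `C̃`, this leaves
`∑ₜ α ‖x t - x̄‖ ≤ C̃ + S x₀ - m`, a bound independent of `T`. Every instant with `‖x t - x̄‖ > ε`
contributes at least `α ε > 0` to this sum, so there are at most `(C̃ + S x₀ - m) / α ε` of them.
-/

open Finset Set

theorem StrictMonoOn.map_nonneg_of_map_zero {α : ℝ → ℝ} (hα : StrictMonoOn α (Ici 0))
    (h0 : α 0 = 0) {r : ℝ} (hr : 0 ≤ r) : 0 ≤ α r :=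
  h0 ▸ hα.monotoneOn self_mem_Ici hr hr

theorem StrictMonoOn.map_pos_of_map_zero {α : ℝ → ℝ} (hα : StrictMonoOn α (Ici 0))
    (h0 : α 0 = 0) {r : ℝ} (hr : 0 < r) : 0 < α r :=
  h0 ▸ hα self_mem_Ici hr.le hr

theorem Finset.card_filter_nsmul_le_sum {ι M : Type*} [AddCommMonoid M] [PartialOrder M]
    [IsOrderedAddMonoid M] (s : Finset ι) (p : ι → Prop) [DecidablePred p] {g : ι → M} {c : M}
    (hg : ∀ i ∈ s, 0 ≤ g i) (hp : ∀ i ∈ s, p i → c ≤ g i) :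
    #(s.filter p) • c ≤ ∑ i ∈ s, g i :=
  calc #(s.filter p) • c ≤ ∑ i ∈ s.filter p, g i :=
        card_nsmul_le_sum _ _ _ fun i hi ↦ hp i (mem_filter.1 hi).1 (mem_filter.1 hi).2
    _ ≤ ∑ i ∈ s, g i := sum_le_sum_of_subset_of_nonneg (filter_subset _ _) fun i hi _ ↦ hg i hi

section Dissipativity

variable {X U : Type*} {f : X → U → X} {Z : Set (X × U)} {S : X → ℝ} {T : ℕ} {x : ℕ → X}
  {u : ℕ → U}

theorem storage_sub_le_sum_supply_of_dissipative {w : X → U → ℝ}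
    (hdiss : ∀ z ∈ Z, S (f z.1 z.2) - S z.1 ≤ w z.1 z.2)
    (hadm : ∀ t < T, x (t + 1) = f (x t) (u t) ∧ (x t, u t) ∈ Z) :
    S (x T) - S (x 0) ≤ ∑ t ∈ range T, w (x t) (u t) := by
  rw [← sum_range_sub (fun t ↦ S (x t))]
  refine sum_le_sum fun t ht ↦ ?_
  obtain ⟨hstep, hmem⟩ := hadm t (mem_range.1 ht)
  simpa [hstep] using hdiss _ hmem

theorem sum_dissipation_rate_le [NormedAddCommGroup X] {ℓ : X → U → ℝ} {xbar : X} {ubar : U}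
    {m : ℝ} {α : ℝ → ℝ} {x₀ : X} {Ctil : ℝ} (hSlb : ∀ x, m ≤ S x)
    (hdiss : ∀ z ∈ Z, S (f z.1 z.2) - S z.1 ≤ ℓ z.1 z.2 - ℓ xbar ubar - α ‖z.1 - xbar‖)
    (hx0 : x 0 = x₀) (hadm : ∀ t < T, x (t + 1) = f (x t) (u t) ∧ (x t, u t) ∈ Z)
    (hcost : ∑ t ∈ range T, ℓ (x t) (u t) ≤ Ctil + T * ℓ xbar ubar) :
    ∑ t ∈ range T, α ‖x t - xbar‖ ≤ Ctil + S x₀ - m := by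
  have htelescope := storage_sub_le_sum_supply_of_dissipative
    (w := fun y v ↦ ℓ y v - ℓ xbar ubar - α ‖y - xbar‖) hdiss hadm
  rw [sum_sub_distrib, sum_sub_distrib, sum_const, card_range, nsmul_eq_mul, hx0] at htelescope
  linarith [hSlb (x T)]

end Dissipativity

theorem strict_dissipativity_implies_cardinality_turnpike_general
    {X U : Type*} [NormedAddCommGroup X]
    (f : X → U → X) (ℓ : X → U → ℝ) (Z : Set (X × U))
    (xbar : X) (ubar : U)
    (S : X → ℝ) (m : ℝ) (hSlb : ∀ x, m ≤ S x)
    (α : ℝ → ℝ) (hα0 : α 0 = 0) (hαmono : StrictMonoOn α (Set.Ici 0))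
    (hdiss : ∀ z ∈ Z, S (f z.1 z.2) - S z.1 ≤ ℓ z.1 z.2 - ℓ xbar ubar - α ‖z.1 - xbar‖)
    (x₀ : X) (Ctil : ℝ) :
    ∃ ν : ℝ → ℝ, ∀ (T : ℕ) (x : ℕ → X) (u : ℕ → U),
      x 0 = x₀ →
      (∀ t < T, x (t+1) = f (x t) (u t) ∧ (x t, u t) ∈ Z) →
      (∑ t ∈ Finset.range T, ℓ (x t) (u t)) ≤ Ctil + T * ℓ xbar ubar →
      ∀ ε > 0, (({t : ℕ | t < T ∧ ε < ‖x t - xbar‖}).ncard : ℝ) ≤ ν ε := by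
  refine ⟨fun ε ↦ (Ctil + S x₀ - m) / α ε, fun T x u hx0 hadm hcost ε hε ↦ ?_⟩
  have hcount := card_filter_nsmul_le_sum (range T) (fun t ↦ ε < ‖x t - xbar‖)
    (g := fun t ↦ α ‖x t - xbar‖) (c := α ε)
    (fun t _ ↦ hαmono.map_nonneg_of_map_zero hα0 (norm_nonneg _))
    (fun t _ hfar ↦ (hαmono hε.le (norm_nonneg _) hfar).le)
  have hset : {t : ℕ | t < T ∧ ε < ‖x t - xbar‖} = ↑((range T).filter (ε < ‖x · - xbar‖)) := by
    ext t; simp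
  rw [hset, ncard_coe_finset, le_div_iff₀ (hαmono.map_pos_of_map_zero hα0 hε), ← nsmul_eq_mul]
  exact hcount.trans (sum_dissipation_rate_le hSlb hdiss hx0 hadm hcost)

/-- strict dissipativity plus a `T`-uniform upper bound on the optimal value
implies the cardinality state-turnpike property at `x̄`, with bound `ν` independent of `T`. -/
theorem strict_dissipativity_implies_cardinality_turnpike
    {X U : Type*} [NormedAddCommGroup X]
    (f : X → U → X) (ℓ : X → U → ℝ) (Z : Set (X × U))
    (xbar : X) (ubar : U) (hequi : f xbar ubar = xbar)
    (S : X → ℝ) (m : ℝ) (hSlb : ∀ x, m ≤ S x)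
    (α : ℝ → ℝ) (hα0 : α 0 = 0) (hαmono : StrictMonoOn α (Set.Ici 0))
    (hαcont : Continuous α) (hαunbdd : ∀ M : ℝ, ∃ r : ℝ, 0 ≤ r ∧ M < α r)
    (hdiss : ∀ z ∈ Z, S (f z.1 z.2) - S z.1 ≤ ℓ z.1 z.2 - ℓ xbar ubar - α ‖z.1 - xbar‖)
    (x₀ : X) (Ctil : ℝ) :
    ∃ ν : ℝ → ℝ, ∀ (T : ℕ) (x : ℕ → X) (u : ℕ → U),
      x 0 = x₀ →
      (∀ t < T, x (t+1) = f (x t) (u t) ∧ (x t, u t) ∈ Z) →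
      (∑ t ∈ Finset.range T, ℓ (x t) (u t)) ≤ Ctil + T * ℓ xbar ubar →
      ∀ ε > 0, (({t : ℕ | t < T ∧ ε < ‖x t - xbar‖}).ncard : ℝ) ≤ ν ε :=
  strict_dissipativity_implies_cardinality_turnpike_general f ℓ Z xbar ubar S m hSlb α hα0 hαmono
    hdiss x₀ Ctil
end

section
/- Under the strict dissipativity and bounded optimal value assumptions of the previous setting, one can take ν(ε) = (C̃ + S(x₀) − m)/α(ε), where m is a lower bound for S: if an optimal trajectory x* for horizon T satisfies ‖x*(t) − x̄‖ > ε for at least K time instants in {0,…,T−1}, then K·α(ε) ≤ C̃ + S(x₀) − m. -/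
/-!
Summing the strict dissipation inequality along the trajectory telescopes the storage function:
`∑ α ‖x t - x̄‖ ≤ (∑ ℓ(x t, u t) - T ℓ(x̄, ū)) + S(x₀) - S(x T) ≤ C̃ + S(x₀) - m`.
Each of the `K` instants with `‖x t - x̄‖ > ε` contributes at least `α ε` to the left-hand side,
and the remaining terms are nonnegative because `α` is increasing with `α 0 = 0`.
-/

open Finset

theorem sub_le_sum_range_of_sub_le {a g : ℕ → ℝ} {T : ℕ}
    (h : ∀ t < T, a (t + 1) - a t ≤ g t) : a T - a 0 ≤ ∑ t ∈ range T, g t := by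
  rw [← sum_range_sub]
  exact sum_le_sum fun t ht => h t (mem_range.mp ht)

theorem natCast_mul_le_sum_range_of_le_ncard {g : ℕ → ℝ} {c : ℝ} {P : ℕ → Prop} {T K : ℕ}
    (hc : 0 ≤ c) (hg : ∀ t < T, 0 ≤ g t) (hP : ∀ t < T, P t → c ≤ g t)
    (hK : K ≤ {t | t < T ∧ P t}.ncard) : K * c ≤ ∑ t ∈ range T, g t := by
  classical
  set F := (range T).filter P
  have hF : {t | t < T ∧ P t} = ↑F := by ext t; simp [F]
  rw [hF, Set.ncard_coe_finset] at hK
  calc (K : ℝ) * c ≤ #F * c := by gcongr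
    _ = #F • c := (nsmul_eq_mul _ _).symm
    _ ≤ ∑ t ∈ F, g t := card_nsmul_le_sum F g c fun t ht => by
        rw [mem_filter, mem_range] at ht
        exact hP t ht.1 ht.2
    _ ≤ ∑ t ∈ range T, g t := sum_le_sum_of_subset_of_nonneg (filter_subset _ _)
        fun t ht _ => hg t (mem_range.mp ht)

theorem sum_dissipation_le_of_admissible {X U : Type*} [NormedAddCommGroup X]
    {f : X → U → X} {ℓ : X → U → ℝ} {Z : Set (X × U)} {xbar : X} {ubar : U} {S : X → ℝ}
    {α : ℝ → ℝ}
    (hdiss : ∀ z ∈ Z, S (f z.1 z.2) - S z.1 ≤ ℓ z.1 z.2 - ℓ xbar ubar - α ‖z.1 - xbar‖)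
    {T : ℕ} {x : ℕ → X} {u : ℕ → U}
    (hadm : ∀ t < T, x (t + 1) = f (x t) (u t) ∧ (x t, u t) ∈ Z) :
    ∑ t ∈ range T, α ‖x t - xbar‖ ≤
      (∑ t ∈ range T, ℓ (x t) (u t)) - T * ℓ xbar ubar + S (x 0) - S (x T) := by
  have htele : S (x T) - S (x 0) ≤
      ∑ t ∈ range T, (ℓ (x t) (u t) - ℓ xbar ubar - α ‖x t - xbar‖) :=
    sub_le_sum_range_of_sub_le (a := fun t => S (x t)) fun t ht => by
      obtain ⟨hdyn, hmem⟩ := hadm t ht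
      simpa only [hdyn] using hdiss (x t, u t) hmem
  rw [sum_sub_distrib, sum_sub_distrib, sum_const, card_range, nsmul_eq_mul] at htele
  linarith

theorem quantitative_turnpike_bound_general
    {X U : Type*} [NormedAddCommGroup X]
    (f : X → U → X) (ℓ : X → U → ℝ) (Z : Set (X × U))
    (xbar : X) (ubar : U)
    (S : X → ℝ) (m : ℝ) (hSlb : ∀ x, m ≤ S x)
    (α : ℝ → ℝ) (hα0 : α 0 = 0) (hαmono : StrictMonoOn α (Set.Ici 0))
    (hdiss : ∀ z ∈ Z, S (f z.1 z.2) - S z.1 ≤ ℓ z.1 z.2 - ℓ xbar ubar - α ‖z.1 - xbar‖)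
    (x₀ : X) (Ctil : ℝ) (T : ℕ) (x : ℕ → X) (u : ℕ → U)
    (hx0 : x 0 = x₀)
    (hadm : ∀ t < T, x (t+1) = f (x t) (u t) ∧ (x t, u t) ∈ Z)
    (hcost : (∑ t ∈ Finset.range T, ℓ (x t) (u t)) ≤ Ctil + T * ℓ xbar ubar)
    (ε : ℝ) (hε : 0 < ε) (K : ℕ)
    (hK : K ≤ ({t : ℕ | t < T ∧ ε < ‖x t - xbar‖}).ncard) :
    (K : ℝ) * α ε ≤ Ctil + S x₀ - m := by
  have hα_nonneg : ∀ r ∈ Set.Ici (0 : ℝ), 0 ≤ α r := fun r hr =>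
    hα0 ▸ hαmono.monotoneOn Set.self_mem_Ici hr hr
  have hcount : (K : ℝ) * α ε ≤ ∑ t ∈ range T, α ‖x t - xbar‖ :=
    natCast_mul_le_sum_range_of_le_ncard (hα_nonneg ε hε.le)
      (fun t _ => hα_nonneg _ (norm_nonneg _))
      (fun t _ hfar => (hαmono hε.le (hε.trans hfar).le hfar).le) hK
  have hdissip := sum_dissipation_le_of_admissible hdiss hadm
  rw [hx0] at hdissip
  linarith [hSlb (x T)]

/-- quantitative turnpike bound: if an optimal trajectory deviates from `x̄`
by more than `ε` at least `K` times, then `K·α(ε) ≤ C̃ + S(x₀) − m`. -/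
theorem quantitative_turnpike_bound
    {X U : Type*} [NormedAddCommGroup X]
    (f : X → U → X) (ℓ : X → U → ℝ) (Z : Set (X × U))
    (xbar : X) (ubar : U) (hequi : f xbar ubar = xbar)
    (S : X → ℝ) (m : ℝ) (hSlb : ∀ x, m ≤ S x)
    (α : ℝ → ℝ) (hα0 : α 0 = 0) (hαmono : StrictMonoOn α (Set.Ici 0))
    (hdiss : ∀ z ∈ Z, S (f z.1 z.2) - S z.1 ≤ ℓ z.1 z.2 - ℓ xbar ubar - α ‖z.1 - xbar‖)
    (x₀ : X) (Ctil : ℝ) (T : ℕ) (x : ℕ → X) (u : ℕ → U)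
    (hx0 : x 0 = x₀)
    (hadm : ∀ t < T, x (t+1) = f (x t) (u t) ∧ (x t, u t) ∈ Z)
    (hcost : (∑ t ∈ Finset.range T, ℓ (x t) (u t)) ≤ Ctil + T * ℓ xbar ubar)
    (ε : ℝ) (hε : 0 < ε) (K : ℕ)
    (hK : K ≤ ({t : ℕ | t < T ∧ ε < ‖x t - xbar‖}).ncard) :
    (K : ℝ) * α ε ≤ Ctil + S x₀ - m :=
  quantitative_turnpike_bound_general f ℓ Z xbar ubar S m hSlb α hα0 hαmono hdiss x₀ Ctil T x u hx0
    hadm hcost ε hε K hK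
end

section
/- Let ξ : [0,∞) → ℝⁿ be uniformly continuous and suppose that for every ε > 0 the set Θ(ε) = {t ≥ 0 : ‖ξ(t) − ξ̄‖ > ε} has finite Lebesgue measure. Then ξ(t) → ξ̄ as t → ∞. -/
/-!
If `ξ` does not tend to `ξbar`, it is at distance `≥ ε` from `ξbar` at arbitrarily large times.
By uniform continuity it then stays at distance `> ε / 2` on a whole interval of fixed length `δ`
after each such time, so `{t | ε / 2 < ‖ξ t - ξbar‖}` meets every tail `[T, ∞)` in measure
at least `δ`. A set of finite measure has tails of vanishing measure, a contradiction.
-/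

open Filter MeasureTheory Set Topology
open scoped ENNReal

theorem volume_eq_top_of_frequently_Ico_subset {S : Set ℝ} {δ : ℝ} (hδ : 0 < δ)
    (hS : ∃ᶠ t in atTop, Ico t (t + δ) ⊆ S) : volume S = ∞ := by
  by_contra hfin
  -- `S` need not be measurable, so pass to a measurable hull of the same measure.
  set U := toMeasurable volume S
  have hempty : ⋂ T : ℝ, U ∩ Ici T = ∅ :=
    eq_empty_iff_forall_notMem.2 fun x hx => by
      have : x + 1 ≤ x := (mem_iInter.1 hx (x + 1)).2
      linarith
  have htail : Tendsto (fun T => volume (U ∩ Ici T)) atTop (𝓝 0) := by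
    have := tendsto_measure_iInter_atTop (μ := volume) (s := fun T : ℝ => U ∩ Ici T)
      (fun T => ((measurableSet_toMeasurable _ _).inter measurableSet_Ici).nullMeasurableSet)
      (fun T T' h => inter_subset_inter_right _ (Ici_subset_Ici.2 h))
      ⟨0, ne_top_of_le_ne_top (by rwa [measure_toMeasurable]) (measure_mono inter_subset_left)⟩
    rwa [hempty, measure_empty] at this
  obtain ⟨t, hsub, hsmall⟩ :=
    (hS.and_eventually (htail.eventually (gt_mem_nhds (ENNReal.ofReal_pos.2 hδ)))).exists
  have hIco : Ico t (t + δ) ⊆ U ∩ Ici t := fun s hs => ⟨subset_toMeasurable _ _ (hsub hs), hs.1⟩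
  have hle := measure_mono (μ := volume) hIco
  rw [Real.volume_Ico, add_sub_cancel_left] at hle
  exact (hle.trans_lt hsmall).false

theorem tendsto_of_uniformContinuousOn_Ici_of_volume_lt_top {E : Type*} [PseudoMetricSpace E]
    {f : ℝ → E} {a : E} (hf : UniformContinuousOn f (Ici 0))
    (hfar : ∀ ε > 0, volume {t | 0 ≤ t ∧ ε < dist (f t) a} < ∞) : Tendsto f atTop (𝓝 a) := by
  refine Metric.tendsto_nhds.2 fun ε hε => ?_
  by_contra hfreq
  rw [not_eventually] at hfreq
  obtain ⟨δ, hδ, hclose⟩ := Metric.uniformContinuousOn_iff.1 hf (ε / 2) (half_pos hε)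
  have hIco : ∃ᶠ t in atTop, Ico t (t + δ) ⊆ {s | 0 ≤ s ∧ ε / 2 < dist (f s) a} := by
    refine (hfreq.and_eventually (eventually_ge_atTop 0)).mono fun t ⟨hft, ht⟩ s hs => ?_
    have hs0 : 0 ≤ s := ht.trans hs.1
    have hts : dist (f t) (f s) < ε / 2 := hclose t ht s hs0 <| by
      rw [Real.dist_eq, abs_lt]
      constructor <;> linarith [hs.1, hs.2]
    exact ⟨hs0, by linarith [dist_triangle (f t) (f s) a, not_lt.1 hft]⟩
  exact (hfar _ (half_pos hε)).ne (volume_eq_top_of_frequently_Ico_subset hδ hIco)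

/-- uniform continuity plus the infinite-horizon measure turnpike property
forces convergence to the turnpike. -/
theorem measure_turnpike_and_uniform_continuity_implies_convergence
    (n : ℕ) (ξ : ℝ → EuclideanSpace ℝ (Fin n)) (ξbar : EuclideanSpace ℝ (Fin n))
    (huc : ∀ ε > 0, ∃ δ > 0, ∀ t s : ℝ, 0 ≤ t → 0 ≤ s → |t - s| < δ → ‖ξ t - ξ s‖ < ε)
    (hmeas : ∀ ε > 0, volume {t : ℝ | 0 ≤ t ∧ ε < ‖ξ t - ξbar‖} < ⊤) :
    Tendsto ξ atTop (nhds ξbar) := by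
  have hunif : UniformContinuousOn ξ (Ici 0) :=
    Metric.uniformContinuousOn_iff.2 fun ε hε => by
      obtain ⟨δ, hδ, hclose⟩ := huc ε hε
      exact ⟨δ, hδ, fun t ht s hs hts => by
        simpa only [dist_eq_norm] using hclose t s ht hs (by rwa [← Real.dist_eq])⟩
  exact tendsto_of_uniformContinuousOn_Ici_of_volume_lt_top hunif
    (by simpa only [dist_eq_norm] using hmeas)
end
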